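/- Let σ be differentiable, and suppose a network satisfies approximate interpolation ‖Z_L − Y‖_F ≤ ε1 with ε1 < s_K(Y) and bounded weights ‖W_ℓ‖_op ≤ r for every ℓ ∈ {L1+1,…,L}. Then the NTK operator norm is lower bounded as ‖Θ‖_op ≥ (s_K(Y) − ε1)² · L2 / (K² r²), where L2 is the number of linear layers. -/

import Mathlib

open Matrix Finset Real

/-- Frobenius norm of a real matrix. -/
noncomputable def frobNorm {m n : ℕ} (A : Matrix (Fin m) (Fin n) ℝ) : ℝ :=
  Real.sqrt (∑ i, ∑ j, (A i j) ^ 2)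

/-- Operator (spectral) norm of a real matrix. -/
noncomputable def opNorm {m n : ℕ} (A : Matrix (Fin m) (Fin n) ℝ) : ℝ :=
  sSup {x : ℝ | ∃ v : Fin n → ℝ, (∑ i, v i ^ 2) ≤ 1 ∧ x = Real.sqrt (∑ i, (A.mulVec v i) ^ 2)}

/-- The singular values of a real matrix, in non-increasing order (indexed by columns). -/
noncomputable def svals {m n : ℕ} (A : Matrix (Fin m) (Fin n) ℝ) : Fin n → ℝ := fun i =>
  Real.sqrt ((show (Aᵀ * A).IsHermitian by
      rw [← Matrix.conjTranspose_eq_transpose_of_trivial]; exact Matrix.isHermitian_conjTranspose_mul_self A).eigenvalues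
    (Tuple.sort ((show (Aᵀ * A).IsHermitian by
      rw [← Matrix.conjTranspose_eq_transpose_of_trivial]; exact Matrix.isHermitian_conjTranspose_mul_self A).eigenvalues) i.rev))

/-- `sval A k` is the `k`-th largest singular value of `A` (1-indexed). -/
noncomputable def sval {m n : ℕ} (A : Matrix (Fin m) (Fin n) ℝ) (k : ℕ) : ℝ :=
  if h : k - 1 < n then svals A ⟨k - 1, h⟩ else 0

/-- Smallest singular value of a (possibly rectangular) matrix. -/
noncomputable def smin {m n : ℕ} (A : Matrix (Fin m) (Fin n) ℝ) : ℝ :=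
  sval A (min m n)

/-- Condition number: the ratio between the largest and the smallest *nonzero*
singular values, i.e. the supremum of ratios of nonzero singular values. -/
noncomputable def kappa {m n : ℕ} (A : Matrix (Fin m) (Fin n) ℝ) : ℝ :=
  sSup {x : ℝ | ∃ i j : Fin n, svals A i ≠ 0 ∧ svals A j ≠ 0 ∧ x = svals A i / svals A j}

/-- The space of all network parameters: the coordinate `p : Fin L` holds the entries of the
weight matrix of layer `p + 1`. -/
abbrev ParamSpace (n : ℕ → ℕ) (L : ℕ) :=
  PiLp 2 (fun p : Fin L => EuclideanSpace ℝ (Fin (n (p.1 + 1)) × Fin (n p.1)))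

/-- The weight matrix of layer `p + 1` extracted from the parameter vector `θ`. -/
noncomputable def WofE {n : ℕ → ℕ} {L : ℕ} (θ : ParamSpace n L) (p : Fin L) :
    Matrix (Fin (n (p.1 + 1))) (Fin (n p.1)) ℝ :=
  Matrix.of fun i j => θ p (i, j)

/-- The layer outputs of the network with parameters `θ` (layers `1,…,L1` are nonlinear with
activation `σ`, the remaining ones are linear). -/
noncomputable def netZE {n : ℕ → ℕ} {L : ℕ} {N : ℕ} (σ : ℝ → ℝ) (L1 : ℕ)
    (X : Matrix (Fin (n 0)) (Fin N) ℝ) (θ : ParamSpace n L) :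
    (ℓ : ℕ) → Matrix (Fin (n ℓ)) (Fin N) ℝ
  | 0 => X
  | (p + 1) =>
    if h : p < L then
      (if p + 1 ≤ L1 then (WofE θ ⟨p, h⟩ * netZE σ L1 X θ p).map σ
       else WofE θ ⟨p, h⟩ * netZE σ L1 X θ p)
    else 0

/-- Operator norm of the empirical neural tangent kernel at parameters `θ`:
`sup_{A ≠ 0} ‖∇_θ Tr[Z_L Aᵀ]‖² / ‖A‖_F²`. -/
noncomputable def NTKop (n : ℕ → ℕ) (L N : ℕ) (σ : ℝ → ℝ) (L1 : ℕ)
    (X : Matrix (Fin (n 0)) (Fin N) ℝ) (θ : ParamSpace n L) : ℝ :=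
  sSup {x : ℝ | ∃ A : Matrix (Fin (n L)) (Fin N) ℝ, A ≠ 0 ∧
    x = ‖gradient (fun ϑ => Matrix.trace (netZE σ L1 X ϑ L * Aᵀ)) θ‖ ^ 2 / frobNorm A ^ 2}

/-!
Let `i₀` be a largest class, of size `c`. The rows of `Y` are indicator vectors of disjoint
classes, so `‖Y w‖² ≤ c ‖w‖²` and every singular value of `Y` is at most `√c`, while the unit
vectors `u = e_{i₀}` and `v = 𝟙_{cls = i₀} / √c` give `uᵀ Y v = √c`. Approximate interpolation
then yields `uᵀ Z_L v ≥ s_K(Y) - ε₁ =: δ`.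

Above layer `L1` the network is linear, so for every linear layer `ℓ` we can write
`Z_L = B W_ℓ Z_{ℓ-1}`, and the gradient of `Tr[Z_L (u vᵀ)ᵀ] = uᵀ Z_L v` with respect to `W_ℓ` is the
rank-one matrix `(Bᵀ u)(Z_{ℓ-1} v)ᵀ`. Its norm `‖Bᵀ u‖ ‖Z_{ℓ-1} v‖` is at least `δ / r`, because
`δ ≤ (Bᵀ u)ᵀ W_ℓ (Z_{ℓ-1} v) ≤ r ‖Bᵀ u‖ ‖Z_{ℓ-1} v‖`. Summing over the `L2` linear layers and
testing the NTK with `A = u vᵀ`, of Frobenius norm `1`, gives `‖Θ‖_op ≥ L2 δ² / r²`.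
-/

section MatrixNorms

variable {m k : ℕ}

lemma frobNorm_nonneg (A : Matrix (Fin m) (Fin k) ℝ) : 0 ≤ frobNorm A :=
  Real.sqrt_nonneg _

lemma frobNorm_sq (A : Matrix (Fin m) (Fin k) ℝ) : frobNorm A ^ 2 = ∑ i, ∑ j, A i j ^ 2 :=
  Real.sq_sqrt (by positivity)

lemma abs_apply_le_frobNorm (A : Matrix (Fin m) (Fin k) ℝ) (i : Fin m) (j : Fin k) :
    |A i j| ≤ frobNorm A := by
  rw [← Real.sqrt_sq_eq_abs]
  refine Real.sqrt_le_sqrt ?_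
  calc A i j ^ 2 ≤ ∑ j', A i j' ^ 2 :=
        single_le_sum (f := fun j' => A i j' ^ 2) (fun _ _ => sq_nonneg _) (mem_univ j)
    _ ≤ ∑ i', ∑ j', A i' j' ^ 2 :=
        single_le_sum (f := fun i' => ∑ j', A i' j' ^ 2) (fun _ _ => by positivity) (mem_univ i)

lemma frobNorm_vecMulVec (u : Fin m → ℝ) (v : Fin k → ℝ) :
    frobNorm (vecMulVec u v) = √(∑ i, u i ^ 2) * √(∑ j, v j ^ 2) := by
  rw [frobNorm, ← Real.sqrt_mul (by positivity), sum_mul_sum]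
  simp only [vecMulVec_apply, mul_pow]

lemma abs_dotProduct_le_sqrt_mul_sqrt (a b : Fin m → ℝ) :
    |a ⬝ᵥ b| ≤ √(∑ i, a i ^ 2) * √(∑ i, b i ^ 2) := by
  refine abs_le.2 ⟨?_, Real.sum_mul_le_sqrt_mul_sqrt _ a b⟩
  have := Real.sum_mul_le_sqrt_mul_sqrt univ (-a) b
  simp only [Pi.neg_apply, neg_mul, sum_neg_distrib, neg_sq] at this
  rw [dotProduct]
  linarith

lemma sum_mulVec_sq_le_frobNorm_sq_mul (A : Matrix (Fin m) (Fin k) ℝ) (v : Fin k → ℝ) :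
    ∑ i, (A *ᵥ v) i ^ 2 ≤ frobNorm A ^ 2 * ∑ j, v j ^ 2 := by
  rw [frobNorm_sq, sum_mul]
  exact sum_le_sum fun i _ => sum_mul_sq_le_sq_mul_sq univ (A i) v

lemma frobNorm_mem_upperBounds_opNorm_set (A : Matrix (Fin m) (Fin k) ℝ) :
    frobNorm A ∈ upperBounds
      {x : ℝ | ∃ v : Fin k → ℝ, (∑ i, v i ^ 2) ≤ 1 ∧ x = √(∑ i, (A *ᵥ v) i ^ 2)} := by
  rintro x ⟨v, hv, rfl⟩
  rw [← Real.sqrt_sq (frobNorm_nonneg A)]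
  refine Real.sqrt_le_sqrt ((sum_mulVec_sq_le_frobNorm_sq_mul A v).trans ?_)
  exact mul_le_of_le_one_right (sq_nonneg _) hv

lemma opNorm_le_frobNorm (A : Matrix (Fin m) (Fin k) ℝ) : opNorm A ≤ frobNorm A :=
  csSup_le ⟨0, 0, by simp, by simp⟩ (frobNorm_mem_upperBounds_opNorm_set A)

lemma opNorm_nonneg (A : Matrix (Fin m) (Fin k) ℝ) : 0 ≤ opNorm A :=
  le_csSup_of_le ⟨_, frobNorm_mem_upperBounds_opNorm_set A⟩ ⟨0, by simp, rfl⟩ (Real.sqrt_nonneg _)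

lemma sqrt_sum_mulVec_sq_le_opNorm_mul (A : Matrix (Fin m) (Fin k) ℝ) (v : Fin k → ℝ) :
    √(∑ i, (A *ᵥ v) i ^ 2) ≤ opNorm A * √(∑ j, v j ^ 2) := by
  set c := √(∑ j, v j ^ 2)
  rcases (Real.sqrt_nonneg _ : 0 ≤ c).eq_or_lt with hc | hc
  · have hsum : ∑ j, v j ^ 2 = 0 := (Real.sqrt_eq_zero (by positivity)).1 hc.symm
    have hv : v = 0 := funext fun j => by
      simpa using congrFun ((Fintype.sum_eq_zero_iff_of_nonneg fun j => sq_nonneg (v j)).1 hsum) j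
    calc √(∑ i, (A *ᵥ v) i ^ 2) = 0 := by simp [hv]
      _ ≤ opNorm A * c := mul_nonneg (opNorm_nonneg A) hc.le
  have hunit : ∑ j, (c⁻¹ • v) j ^ 2 = 1 := by
    simp only [Pi.smul_apply, smul_eq_mul, mul_pow, ← mul_sum, inv_pow]
    rw [← Real.sq_sqrt (sum_nonneg fun j _ => sq_nonneg (v j))]
    exact inv_mul_cancel₀ (by positivity)
  have hle : √(∑ i, (A *ᵥ (c⁻¹ • v)) i ^ 2) ≤ opNorm A :=
    le_csSup ⟨_, frobNorm_mem_upperBounds_opNorm_set A⟩ ⟨_, hunit.le, rfl⟩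
  have hscale : √(∑ i, (A *ᵥ (c⁻¹ • v)) i ^ 2) = c⁻¹ * √(∑ i, (A *ᵥ v) i ^ 2) := by
    simp only [mulVec_smul, Pi.smul_apply, smul_eq_mul, mul_pow, ← mul_sum]
    rw [Real.sqrt_mul (by positivity), Real.sqrt_sq (by positivity)]
  rw [hscale, inv_mul_le_iff₀ hc] at hle
  linarith

lemma abs_dotProduct_mulVec_le (A : Matrix (Fin m) (Fin k) ℝ) (u : Fin m → ℝ) (v : Fin k → ℝ) :
    |u ⬝ᵥ (A *ᵥ v)| ≤ opNorm A * (√(∑ i, u i ^ 2) * √(∑ j, v j ^ 2)) :=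
  calc |u ⬝ᵥ (A *ᵥ v)| ≤ √(∑ i, u i ^ 2) * √(∑ i, (A *ᵥ v) i ^ 2) :=
        abs_dotProduct_le_sqrt_mul_sqrt u _
    _ ≤ √(∑ i, u i ^ 2) * (opNorm A * √(∑ j, v j ^ 2)) :=
        mul_le_mul_of_nonneg_left (sqrt_sum_mulVec_sq_le_opNorm_mul A v) (Real.sqrt_nonneg _)
    _ = opNorm A * (√(∑ i, u i ^ 2) * √(∑ j, v j ^ 2)) := by ring

lemma sub_frobNorm_sub_le_dotProduct_mulVec (Z Y : Matrix (Fin m) (Fin k) ℝ) {u : Fin m → ℝ}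
    {v : Fin k → ℝ} (hu : ∑ i, u i ^ 2 = 1) (hv : ∑ j, v j ^ 2 = 1) :
    u ⬝ᵥ (Y *ᵥ v) - frobNorm (Z - Y) ≤ u ⬝ᵥ (Z *ᵥ v) := by
  have h := abs_dotProduct_mulVec_le (Z - Y) u v
  rw [hu, hv, Real.sqrt_one, mul_one, mul_one, sub_mulVec, dotProduct_sub] at h
  linarith [(abs_le.1 h).1, opNorm_le_frobNorm (Z - Y)]

end MatrixNorms

section SingularValues

lemma Matrix.IsHermitian.eigenvalues_transpose_mul_self_le {m k : ℕ} {Y : Matrix (Fin m) (Fin k) ℝ}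
    (hH : (Yᵀ * Y).IsHermitian) {c : ℝ}
    (hc : ∀ w : Fin k → ℝ, ∑ i, (Y *ᵥ w) i ^ 2 ≤ c * ∑ j, w j ^ 2) (j : Fin k) :
    hH.eigenvalues j ≤ c := by
  set w := hH.eigenvectorBasis j
  have hw : ∑ l, w l ^ 2 = 1 := by
    have := hH.eigenvectorBasis.orthonormal.1 j
    rw [EuclideanSpace.norm_eq, Real.sqrt_eq_one] at this
    simpa using this
  have hray : hH.eigenvalues j = ∑ l, (Y *ᵥ w) l ^ 2 := by
    rw [hH.eigenvalues_eq, ← mulVec_mulVec, dotProduct_mulVec, vecMul_transpose]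
    simp [w, dotProduct, sq]
  rw [hray]
  simpa [hw] using hc w

lemma sval_le_sqrt_of_sum_mulVec_sq_le {m k : ℕ} (Y : Matrix (Fin m) (Fin k) ℝ) {c : ℝ}
    (hc : ∀ w : Fin k → ℝ, ∑ i, (Y *ᵥ w) i ^ 2 ≤ c * ∑ j, w j ^ 2) (K : ℕ) :
    sval Y K ≤ √c := by
  unfold sval
  split_ifs
  · exact Real.sqrt_le_sqrt (IsHermitian.eigenvalues_transpose_mul_self_le _ hc _)
  · exact Real.sqrt_nonneg c

end SingularValues

section ClassIndicator

variable {ι κ : Type*} [Fintype κ] [DecidableEq ι]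
  {Y : Matrix ι κ ℝ} {cls : κ → ι}

lemma mulVec_apply_eq_sum_fiber (hY : ∀ i j, Y i j = if i = cls j then 1 else 0)
    (w : κ → ℝ) (i : ι) : (Y *ᵥ w) i = ∑ j with cls j = i, w j := by
  simp [mulVec, dotProduct, hY, sum_filter, eq_comm]

lemma sum_mulVec_sq_le_of_card_fiber_le [Fintype ι] (hY : ∀ i j, Y i j = if i = cls j then 1 else 0)
    {c : ℕ} (hc : ∀ i, #{j | cls j = i} ≤ c) (w : κ → ℝ) :
    ∑ i, (Y *ᵥ w) i ^ 2 ≤ c * ∑ j, w j ^ 2 :=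
  calc ∑ i, (Y *ᵥ w) i ^ 2 = ∑ i, (∑ j with cls j = i, w j) ^ 2 := by
        simp only [mulVec_apply_eq_sum_fiber hY]
    _ ≤ ∑ i, (#{j | cls j = i} : ℝ) * ∑ j with cls j = i, w j ^ 2 :=
        sum_le_sum fun i _ => sq_sum_le_card_mul_sum_sq
    _ ≤ ∑ i, (c : ℝ) * ∑ j with cls j = i, w j ^ 2 :=
        sum_le_sum fun i _ => mul_le_mul_of_nonneg_right (by exact_mod_cast hc i)
          (sum_nonneg fun _ _ => sq_nonneg _)
    _ = c * ∑ j, w j ^ 2 := by rw [← mul_sum, sum_fiberwise]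

lemma exists_unit_dotProduct_mulVec_eq_sqrt_card_fiber [Fintype ι]
    (hY : ∀ i j, Y i j = if i = cls j then 1 else 0) {i₀ : ι} (hi₀ : 0 < #{j | cls j = i₀}) :
    ∃ (u : ι → ℝ) (v : κ → ℝ), ∑ i, u i ^ 2 = 1 ∧ ∑ j, v j ^ 2 = 1 ∧
      u ⬝ᵥ (Y *ᵥ v) = √((#{j | cls j = i₀} : ℕ) : ℝ) := by
  have hc : (0 : ℝ) < #{j | cls j = i₀} := by exact_mod_cast hi₀
  refine ⟨Pi.single i₀ 1, fun j => if cls j = i₀ then (√(#{j | cls j = i₀} : ℝ))⁻¹ else 0,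
    by simp [Pi.single_apply, ite_pow], ?_, ?_⟩
  · simp only [ite_pow, inv_pow, Real.sq_sqrt hc.le, ne_eq, OfNat.ofNat_ne_zero,
      not_false_eq_true, zero_pow]
    rw [← sum_filter, sum_const, nsmul_eq_mul, mul_inv_cancel₀ hc.ne']
  · rw [single_one_dotProduct, mulVec_apply_eq_sum_fiber hY,
      sum_congr rfl fun j hj => if_pos (mem_filter.1 hj).2, sum_const, nsmul_eq_mul,
      ← div_eq_mul_inv, Real.div_sqrt]

lemma exists_unit_sval_le_dotProduct_mulVec {m k : ℕ} {Y : Matrix (Fin m) (Fin k) ℝ}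
    {cls : Fin k → Fin m} (hY : ∀ i j, Y i j = if i = cls j then 1 else 0) {K : ℕ}
    (hK : 0 < sval Y K) :
    ∃ (u : Fin m → ℝ) (v : Fin k → ℝ), ∑ i, u i ^ 2 = 1 ∧ ∑ j, v j ^ 2 = 1 ∧
      sval Y K ≤ u ⬝ᵥ (Y *ᵥ v) := by
  have hk : 0 < k := by
    by_contra h
    simp [sval, Nat.eq_zero_of_not_pos h] at hK
  have : Nonempty (Fin m) := ⟨cls ⟨0, hk⟩⟩
  obtain ⟨i₀, hi₀⟩ := Finite.exists_max fun i => #{j | cls j = i}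
  have hsval : sval Y K ≤ √(#{j | cls j = i₀} : ℝ) :=
    sval_le_sqrt_of_sum_mulVec_sq_le Y (sum_mulVec_sq_le_of_card_fiber_le hY hi₀) K
  have hc : 0 < #{j | cls j = i₀} := by
    by_contra h
    simp [Nat.eq_zero_of_not_pos h] at hsval
    linarith
  obtain ⟨u, v, hu, hv, huv⟩ := exists_unit_dotProduct_mulVec_eq_sqrt_card_fiber hY hc
  exact ⟨u, v, hu, hv, huv ▸ hsval⟩

end ClassIndicator

section Calculus

lemma PiLp.inner_single_right {𝕜 ι : Type*} [RCLike 𝕜] [Fintype ι] [DecidableEq ι]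
    {β : ι → Type*} [∀ i, NormedAddCommGroup (β i)] [∀ i, InnerProductSpace 𝕜 (β i)]
    (x : PiLp 2 β) (i : ι) (a : β i) : inner 𝕜 x (PiLp.single 2 i a) = inner 𝕜 (x i) a := by
  rw [PiLp.inner_apply, sum_eq_single i (fun j _ hj => by
    rw [PiLp.single_eq_of_ne (p := 2) hj, inner_zero_right]) (by simp), PiLp.single_eq_same]

lemma fderiv_apply_eq_of_forall_add_smul {E : Type*} [NormedAddCommGroup E] [NormedSpace ℝ E]
    {f : E → ℝ} {x d : E} {b : ℝ} (hf : DifferentiableAt ℝ f x)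
    (hline : ∀ t : ℝ, f (x + t • d) = f x + t * b) : fderiv ℝ f x d = b := by
  rw [← hf.lineDeriv_eq_fderiv, lineDeriv, funext hline]
  simp

lemma norm_fderiv_trace_mul_transpose_le {E : Type*} [NormedAddCommGroup E] [NormedSpace ℝ E]
    {m k : ℕ} {F : E → Matrix (Fin m) (Fin k) ℝ} {x : E}
    (hF : ∀ i j, DifferentiableAt ℝ (fun y => F y i j) x) (A : Matrix (Fin m) (Fin k) ℝ) :
    ‖fderiv ℝ (fun y => trace (F y * Aᵀ)) x‖ ≤
      frobNorm A * ∑ i, ∑ j, ‖fderiv ℝ (fun y => F y i j) x‖ := by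
  have hsum : (fun y => trace (F y * Aᵀ)) = fun y => ∑ i, ∑ j, A i j * F y i j := by
    ext y
    simp [trace, mul_apply, mul_comm]
  have hderiv : HasFDerivAt (fun y => trace (F y * Aᵀ))
      (∑ i, ∑ j, A i j • fderiv ℝ (fun y => F y i j) x) x := by
    rw [hsum]
    exact HasFDerivAt.fun_sum fun i _ => HasFDerivAt.fun_sum fun j _ =>
      (hF i j).hasFDerivAt.const_mul (A i j)
  rw [hderiv.fderiv, mul_sum]
  refine (norm_sum_le _ _).trans (sum_le_sum fun i _ => ?_)
  rw [mul_sum]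
  refine (norm_sum_le _ _).trans (sum_le_sum fun j _ => ?_)
  rw [norm_smul, Real.norm_eq_abs]
  exact mul_le_mul_of_nonneg_right (abs_apply_le_frobNorm A i j) (norm_nonneg _)

end Calculus

lemma trace_mul_transpose_vecMulVec {m k : ℕ} (M : Matrix (Fin m) (Fin k) ℝ) (u : Fin m → ℝ)
    (v : Fin k → ℝ) : trace (M * (vecMulVec u v)ᵀ) = u ⬝ᵥ (M *ᵥ v) := by
  rw [transpose_vecMulVec, mul_vecMulVec, trace_vecMulVec, dotProduct_comm]

lemma norm_toLp_mul_apply {m k : ℕ} (a : Fin m → ℝ) (z : Fin k → ℝ) :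
    ‖(WithLp.toLp 2 fun kt => a kt.1 * z kt.2 : EuclideanSpace ℝ (Fin m × Fin k))‖ =
      √(∑ i, a i ^ 2) * √(∑ j, z j ^ 2) := by
  rw [EuclideanSpace.norm_eq, ← Real.sqrt_mul (by positivity), sum_mul_sum, Fintype.sum_prod_type]
  simp [mul_pow]

lemma card_filter_le_val (L L1 : ℕ) : #{p : Fin L | L1 ≤ p.1} = L - L1 := by
  have h := card_filter_add_card_filter_not (s := univ) fun p : Fin L => p.1 < L1
  simp only [Fin.card_filter_val_lt, not_lt, card_univ, Fintype.card_fin] at h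
  omega

lemma PiLp.card_mul_le_mul_norm_sq {ι : Type*} [Fintype ι] {β : ι → Type*}
    [∀ i, SeminormedAddCommGroup (β i)] (g : PiLp 2 β) (s : Finset ι) {a c : ℝ} (hc : 0 ≤ c)
    (h : ∀ i ∈ s, a ≤ c * ‖g i‖ ^ 2) : #s * a ≤ c * ‖g‖ ^ 2 :=
  calc #s * a = ∑ i ∈ s, a := by rw [sum_const, nsmul_eq_mul]
    _ ≤ ∑ i ∈ s, c * ‖g i‖ ^ 2 := sum_le_sum h
    _ ≤ ∑ i, c * ‖g i‖ ^ 2 :=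
        sum_le_sum_of_subset_of_nonneg (subset_univ s) fun _ _ _ => by positivity
    _ = c * ‖g‖ ^ 2 := by rw [← mul_sum, PiLp.norm_sq_eq_of_L2]

section Network

variable {n : ℕ → ℕ} {L N : ℕ} (σ : ℝ → ℝ) (L1 : ℕ) (X : Matrix (Fin (n 0)) (Fin N) ℝ)

lemma netZE_succ_of_le (θ : ParamSpace n L) (p : Fin L) (hp : L1 ≤ p.1) :
    netZE σ L1 X θ (p.1 + 1) = WofE θ p * netZE σ L1 X θ p.1 := by
  rw [netZE, dif_pos p.2, if_neg (by omega)]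

lemma differentiable_netZE_apply (hσ : Differentiable ℝ σ) (ℓ : ℕ) (i : Fin (n ℓ))
    (j : Fin N) : Differentiable ℝ fun ϑ : ParamSpace n L => netZE σ L1 X ϑ ℓ i j := by
  induction ℓ with
  | zero => exact differentiable_const _
  | succ p ih =>
    by_cases hp : p < L
    · have hpre : Differentiable ℝ fun ϑ : ParamSpace n L =>
          (WofE ϑ ⟨p, hp⟩ * netZE σ L1 X ϑ p) i j := by
        simp only [mul_apply, WofE, of_apply]
        fun_prop
      by_cases hlin : p + 1 ≤ L1
      · simp only [netZE, dif_pos hp, if_pos hlin, map_apply]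
        exact hσ.comp hpre
      · simpa [netZE, hp, hlin] using hpre
    · simp [netZE, hp]

lemma netZE_congr {θ θ' : ParamSpace n L} {ℓ : ℕ}
    (h : ∀ p : Fin L, p.1 < ℓ → WofE θ p = WofE θ' p) :
    netZE σ L1 X θ ℓ = netZE σ L1 X θ' ℓ := by
  induction ℓ with
  | zero => rfl
  | succ p ih =>
    by_cases hp : p < L
    · simp [netZE, hp, h ⟨p, hp⟩ p.lt_succ_self, ih fun q hq => h q (hq.trans p.lt_succ_self)]
    · simp [netZE, hp]

lemma exists_netZE_eq_mul (θ : ParamSpace n L) {ℓ : ℕ} (hℓ : L1 ≤ ℓ) (hℓL : ℓ ≤ L) :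
    ∃ B : Matrix (Fin (n L)) (Fin (n ℓ)) ℝ, ∀ ϑ : ParamSpace n L,
      (∀ p : Fin L, ℓ ≤ p.1 → WofE ϑ p = WofE θ p) →
      netZE σ L1 X ϑ L = B * netZE σ L1 X ϑ ℓ := by
  -- `B = W_L ⋯ W_{ℓ+1}`, read off from the layers of `θ`
  induction hℓL using Nat.decreasingInduction with
  | self => exact ⟨1, fun _ _ => (Matrix.one_mul _).symm⟩
  | of_succ ℓ hℓL ih =>
    obtain ⟨B, hB⟩ := ih (by omega)
    refine ⟨B * WofE θ ⟨ℓ, hℓL⟩, fun ϑ hϑ => ?_⟩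
    rw [hB ϑ fun p hp => hϑ p (by omega), netZE_succ_of_le σ L1 X ϑ ⟨ℓ, hℓL⟩ hℓ,
      hϑ ⟨ℓ, hℓL⟩ le_rfl, Matrix.mul_assoc]

lemma WofE_add_smul_single_self (θ : ParamSpace n L) (p : Fin L)
    (D : EuclideanSpace ℝ (Fin (n (p.1 + 1)) × Fin (n p.1))) (t : ℝ) :
    WofE (θ + t • PiLp.single 2 p D) p = WofE θ p + t • Matrix.of fun i j => D (i, j) := by
  ext i j
  simp [WofE]

lemma WofE_add_smul_single_of_ne (θ : ParamSpace n L) {p q : Fin L} (hqp : q ≠ p)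
    (D : EuclideanSpace ℝ (Fin (n (p.1 + 1)) × Fin (n p.1))) (t : ℝ) :
    WofE (θ + t • PiLp.single 2 p D) q = WofE θ q := by
  ext i j
  simp [WofE, PiLp.single_eq_of_ne (p := 2) hqp]

lemma netZE_add_smul_single (θ : ParamSpace n L) (p : Fin L) (hp : L1 ≤ p.1)
    (B : Matrix (Fin (n L)) (Fin (n (p.1 + 1))) ℝ)
    (hB : ∀ ϑ : ParamSpace n L, (∀ q : Fin L, p.1 + 1 ≤ q.1 → WofE ϑ q = WofE θ q) →
      netZE σ L1 X ϑ L = B * netZE σ L1 X ϑ (p.1 + 1))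
    (D : EuclideanSpace ℝ (Fin (n (p.1 + 1)) × Fin (n p.1))) (t : ℝ) :
    netZE σ L1 X (θ + t • PiLp.single 2 p D) L =
      netZE σ L1 X θ L + t • (B * ((Matrix.of fun i j => D (i, j)) * netZE σ L1 X θ p.1)) := by
  have hlower : netZE σ L1 X (θ + t • PiLp.single 2 p D) p.1 = netZE σ L1 X θ p.1 :=
    netZE_congr σ L1 X fun q hq => WofE_add_smul_single_of_ne θ (Fin.ne_of_lt hq) D t
  rw [hB _ fun q hq => WofE_add_smul_single_of_ne θ (by omega) D t, hB θ fun _ _ => rfl,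
    netZE_succ_of_le σ L1 X _ p hp, netZE_succ_of_le σ L1 X _ p hp,
    WofE_add_smul_single_self, hlower, Matrix.add_mul, Matrix.mul_add, Matrix.smul_mul,
    Matrix.mul_smul]

lemma gradient_trace_mul_vecMulVec_apply (hσ : Differentiable ℝ σ) (θ : ParamSpace n L)
    (p : Fin L) (hp : L1 ≤ p.1) (B : Matrix (Fin (n L)) (Fin (n (p.1 + 1))) ℝ)
    (hB : ∀ ϑ : ParamSpace n L, (∀ q : Fin L, p.1 + 1 ≤ q.1 → WofE ϑ q = WofE θ q) →
      netZE σ L1 X ϑ L = B * netZE σ L1 X ϑ (p.1 + 1))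
    (u : Fin (n L) → ℝ) (v : Fin N → ℝ) :
    (gradient (fun ϑ => trace (netZE σ L1 X ϑ L * (vecMulVec u v)ᵀ)) θ) p =
      WithLp.toLp 2 fun kt => (u ᵥ* B) kt.1 * (netZE σ L1 X θ p.1 *ᵥ v) kt.2 := by
  have hdiff : Differentiable ℝ fun ϑ : ParamSpace n L =>
      trace (netZE σ L1 X ϑ L * (vecMulVec u v)ᵀ) := by
    simp only [trace_mul_transpose_vecMulVec, dotProduct, mulVec]
    exact Differentiable.fun_sum fun i _ => (Differentiable.fun_sum fun j _ =>
      (differentiable_netZE_apply σ L1 X hσ L i j).mul_const _).const_mul _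
  refine ext_inner_right ℝ fun D => ?_
  rw [← PiLp.inner_single_right, inner_gradient_left,
    fderiv_apply_eq_of_forall_add_smul (hdiff θ) fun t => by
      rw [netZE_add_smul_single σ L1 X θ p hp B hB D t, Matrix.add_mul, trace_add,
        Matrix.smul_mul, trace_smul, smul_eq_mul]]
  rw [trace_mul_transpose_vecMulVec, ← mulVec_mulVec, dotProduct_mulVec, ← mulVec_mulVec,
    PiLp.inner_apply, Fintype.sum_prod_type]
  simp [dotProduct, mulVec, mul_sum, mul_left_comm]

lemma abs_dotProduct_netZE_mulVec_le (hσ : Differentiable ℝ σ) (θ : ParamSpace n L)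
    (p : Fin L) (hp : L1 ≤ p.1) (u : Fin (n L) → ℝ) (v : Fin N → ℝ) :
    |u ⬝ᵥ (netZE σ L1 X θ L *ᵥ v)| ≤ opNorm (WofE θ p) *
      ‖(gradient (fun ϑ => trace (netZE σ L1 X ϑ L * (vecMulVec u v)ᵀ)) θ) p‖ := by
  obtain ⟨B, hB⟩ := exists_netZE_eq_mul σ L1 X θ (ℓ := p.1 + 1) (by omega) p.2
  rw [gradient_trace_mul_vecMulVec_apply σ L1 X hσ θ p hp B hB u v, norm_toLp_mul_apply,
    hB θ fun _ _ => rfl, netZE_succ_of_le σ L1 X θ p hp, ← mulVec_mulVec, dotProduct_mulVec,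
    ← mulVec_mulVec]
  exact abs_dotProduct_mulVec_le _ _ _

lemma NTKop_nonneg (θ : ParamSpace n L) : 0 ≤ NTKop n L N σ L1 X θ :=
  Real.sSup_nonneg fun _ ⟨_, _, hx⟩ => hx ▸ by positivity

lemma norm_gradient_sq_div_le_NTKop (hσ : Differentiable ℝ σ) (θ : ParamSpace n L)
    {A : Matrix (Fin (n L)) (Fin N) ℝ} (hA : A ≠ 0) :
    ‖gradient (fun ϑ => trace (netZE σ L1 X ϑ L * Aᵀ)) θ‖ ^ 2 / frobNorm A ^ 2 ≤
      NTKop n L N σ L1 X θ := by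
  set S := ∑ i, ∑ j, ‖fderiv ℝ (fun ϑ : ParamSpace n L => netZE σ L1 X ϑ L i j) θ‖
  refine le_csSup ⟨S ^ 2, ?_⟩ ⟨A, hA, rfl⟩
  rintro _ ⟨A', -, rfl⟩
  have hle : ‖gradient (fun ϑ => trace (netZE σ L1 X ϑ L * A'ᵀ)) θ‖ ≤ frobNorm A' * S := by
    rw [gradient, LinearIsometryEquiv.norm_map]
    exact norm_fderiv_trace_mul_transpose_le
      (fun i j => (differentiable_netZE_apply σ L1 X hσ L i j).differentiableAt) A'
  refine div_le_of_le_mul₀ (by positivity) (by positivity) ?_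
  calc _ ≤ (frobNorm A' * S) ^ 2 := pow_le_pow_left₀ (norm_nonneg _) hle 2
    _ = S ^ 2 * frobNorm A' ^ 2 := by ring

end Network

theorem statement18_general
    (L1 L2 L : ℕ) (hLdef : L = L1 + L2)
    (n : ℕ → ℕ) (N K : ℕ)
    (σ : ℝ → ℝ) (hσ : Differentiable ℝ σ)
    (X : Matrix (Fin (n 0)) (Fin N) ℝ)
    (Y : Matrix (Fin (n L)) (Fin N) ℝ)
    (cls : Fin N → Fin (n L))
    (hY : ∀ i j, Y i j = if i = cls j then 1 else 0)
    (θ : ParamSpace n L)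
    (ε1 r : ℝ)
    -- approximate interpolation
    (hA1 : frobNorm (netZE σ L1 X θ L - Y) ≤ ε1)
    (hε1 : ε1 < sval Y K)
    -- bounded weights of the linear layers (parameter index p corresponds to layer p+1)
    (hW : ∀ p : Fin L, L1 ≤ p.1 → opNorm (WofE θ p) ≤ r) :
    (sval Y K - ε1) ^ 2 * L2 / ((K : ℝ) ^ 2 * r ^ 2) ≤ NTKop n L N σ L1 X θ := by
  rcases K.eq_zero_or_pos with rfl | hK₀
  · simpa using NTKop_nonneg σ L1 X θ
  obtain ⟨u, v, hu, hv, hYuv⟩ :=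
    exists_unit_sval_le_dotProduct_mulVec hY ((frobNorm_nonneg _).trans hA1 |>.trans_lt hε1)
  set δ := sval Y K - ε1
  set g := gradient (fun ϑ => trace (netZE σ L1 X ϑ L * (vecMulVec u v)ᵀ)) θ
  have hδ : δ ≤ u ⬝ᵥ (netZE σ L1 X θ L *ᵥ v) := by
    linarith [sub_frobNorm_sub_le_dotProduct_mulVec (netZE σ L1 X θ L) Y hu hv]
  have hsum : L2 * δ ^ 2 ≤ r ^ 2 * ‖g‖ ^ 2 := by
    have hcard : (#{p : Fin L | L1 ≤ p.1} : ℝ) = L2 := by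
      rw [card_filter_le_val, hLdef, add_tsub_cancel_left]
    rw [← hcard]
    refine g.card_mul_le_mul_norm_sq _ (sq_nonneg r) fun p hps => ?_
    have hp : L1 ≤ p.1 := (mem_filter.1 hps).2
    calc δ ^ 2 ≤ (opNorm (WofE θ p) * ‖g p‖) ^ 2 := pow_le_pow_left₀ (by linarith)
          (hδ.trans ((le_abs_self _).trans (abs_dotProduct_netZE_mulVec_le σ L1 X hσ θ p hp u v))) 2
      _ ≤ r ^ 2 * ‖g p‖ ^ 2 := by
          rw [mul_pow]
          gcongr
          exacts [opNorm_nonneg _, hW p hp]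
  have hA : frobNorm (vecMulVec u v) = 1 := by simp [frobNorm_vecMulVec, hu, hv]
  calc δ ^ 2 * L2 / ((K : ℝ) ^ 2 * r ^ 2) ≤ ‖g‖ ^ 2 := by
        refine div_le_of_le_mul₀ (by positivity) (by positivity) ?_
        have hK₁ : (1 : ℝ) ≤ (K : ℝ) ^ 2 := one_le_pow₀ (by exact_mod_cast hK₀)
        linarith [le_mul_of_one_le_left (by positivity : 0 ≤ r ^ 2 * ‖g‖ ^ 2) hK₁]
    _ = ‖g‖ ^ 2 / frobNorm (vecMulVec u v) ^ 2 := by rw [hA, one_pow, div_one]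
    _ ≤ NTKop n L N σ L1 X θ :=
        norm_gradient_sq_div_le_NTKop σ L1 X hσ θ fun h => by simp [h, frobNorm] at hA

/-- Proposition 5.3, second part: approximate interpolation and bounded
weights force the NTK operator norm to grow linearly with the number of linear layers. -/
theorem statement18
    (L1 L2 L : ℕ) (hL2 : 1 ≤ L2) (hLdef : L = L1 + L2)
    (n : ℕ → ℕ) (N K : ℕ) (hK : n L = K)
    (σ : ℝ → ℝ) (hσ : Differentiable ℝ σ)
    (X : Matrix (Fin (n 0)) (Fin N) ℝ)
    (Y : Matrix (Fin (n L)) (Fin N) ℝ)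
    (cls : Fin N → Fin (n L))
    (hY : ∀ i j, Y i j = if i = cls j then 1 else 0)
    (θ : ParamSpace n L)
    (ε1 r : ℝ)
    -- approximate interpolation
    (hA1 : frobNorm (netZE σ L1 X θ L - Y) ≤ ε1)
    (hε1 : ε1 < sval Y K)
    -- bounded weights of the linear layers (parameter index p corresponds to layer p+1)
    (hW : ∀ p : Fin L, L1 ≤ p.1 → opNorm (WofE θ p) ≤ r) :
    (sval Y K - ε1) ^ 2 * L2 / ((K : ℝ) ^ 2 * r ^ 2) ≤ NTKop n L N σ L1 X θ :=
  statement18_general L1 L2 L hLdef n N K σ hσ X Y cls hY θ ε1 r hA1 hε1 hW
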